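/- For every n ∈ ℤ with n ≠ 0, one has c(2nπi) ≠ 1, and the 3×3 complex matrix M(0,2nπ) with rows (c(2nπi)−1, s(2nπi)/(2nπi), d(2nπi)/(2nπi)²), (2nπi·d(2nπi), c(2nπi)−1, s(2nπi)/(2nπi)), ((2nπi)²·s(2nπi), 2nπi·d(2nπi), c(2nπi)−1) has rank exactly 2. -/

import Mathlib

open Complex

/-- ω = exp(2πi/3), a primitive cube root of unity. -/
noncomputable def ω : ℂ := Complex.exp (2 * Real.pi * Complex.I / 3)

/-- c(z) = (1/3)·∑_{k=1}^{3} exp(ω^k z). -/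
noncomputable def cf (z : ℂ) : ℂ :=
  (1/3) * (Complex.exp (ω ^ 1 * z) + Complex.exp (ω ^ 2 * z) + Complex.exp (ω ^ 3 * z))

/-- s(z) = (1/3)·∑_{k=1}^{3} ω^{-k} exp(ω^k z). -/
noncomputable def sf (z : ℂ) : ℂ :=
  (1/3) * ((ω ^ 1)⁻¹ * Complex.exp (ω ^ 1 * z) + (ω ^ 2)⁻¹ * Complex.exp (ω ^ 2 * z) +
    (ω ^ 3)⁻¹ * Complex.exp (ω ^ 3 * z))

/-- d(z) = (1/3)·∑_{k=1}^{3} ω^k exp(ω^k z). -/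
noncomputable def df (z : ℂ) : ℂ :=
  (1/3) * (ω ^ 1 * Complex.exp (ω ^ 1 * z) + ω ^ 2 * Complex.exp (ω ^ 2 * z) +
    ω ^ 3 * Complex.exp (ω ^ 3 * z))

/-- The boundary-condition matrix M(0,λ) of the periodic problem for i·y‴ = λ³·y. -/
noncomputable def M₀ (lam : ℂ) : Matrix (Fin 3) (Fin 3) ℂ :=
  !![cf (Complex.I * lam) - 1, sf (Complex.I * lam) / (Complex.I * lam),
       df (Complex.I * lam) / (Complex.I * lam) ^ 2;
     Complex.I * lam * df (Complex.I * lam), cf (Complex.I * lam) - 1,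
       sf (Complex.I * lam) / (Complex.I * lam);
     (Complex.I * lam) ^ 2 * sf (Complex.I * lam), Complex.I * lam * df (Complex.I * lam),
       cf (Complex.I * lam) - 1]


/-!
Put `z = 2nπi`, so that `exp z = 1`. Conjugating by `diag(1, z, z²)` turns `M₀(2nπ)` into the
circulant matrix with first row `(c z - 1, s z, d z)`, which the Fourier matrix `(ω^{jk})`
diagonalises with eigenvalues `exp (ω^k z) - 1`. The eigenvalue for `k = 0` vanishes. Since
`1 + ω + ω² = 0`, the other two satisfy `exp (ω z) * exp (ω² z) = exp (-z) = 1`, and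
`|exp (ω z)| = exp (-2nπ Im ω) ≠ 1`, so neither of them vanishes and the rank is `2`. The same
relations show that `3 c z = 1 + exp (ω z) + exp (ω² z) = 3` would force `exp (ω z) = 1`.
-/

open Matrix

theorem Matrix.rank_eq_of_mul_eq_mul {n K : Type*} [Fintype n] [DecidableEq n] [CommRing K]
    {A B P : Matrix n n K} (hP : IsUnit P.det) (h : A * P = P * B) : A.rank = B.rank := by
  rw [← rank_mul_eq_left_of_isUnit_det P A hP, h, rank_mul_eq_right_of_isUnit_det P B hP]

theorem Matrix.rank_diagonal_zero_cons_cons {K : Type*} [Field K] {x y : K} (hx : x ≠ 0)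
    (hy : y ≠ 0) : (diagonal ![0, x, y]).rank = 2 := by
  classical
  rw [rank_diagonal, Fintype.card_subtype]
  simp [Fin.univ_succ, Finset.filter_insert, Finset.filter_singleton, hx, hy]

theorem Matrix.circulant_fin_three_mul_vandermonde {R : Type*} [CommRing R] {ζ : R}
    (hζ : ζ ^ 3 = 1) (x y w : R) :
    circulant ![x, y, w] * vandermonde ![1, ζ, ζ ^ 2] =
      vandermonde ![1, ζ, ζ ^ 2] *
        diagonal ![x + y + w, x + ζ ^ 2 * y + ζ * w, x + ζ * y + ζ ^ 2 * w] := by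
  ext i j
  fin_cases i <;> fin_cases j <;>
    simp [mul_apply, Fin.sum_univ_three, circulant_apply, vandermonde_apply] <;> grind

theorem isPrimitiveRoot_ω : IsPrimitiveRoot ω 3 := by
  simpa [ω] using Complex.isPrimitiveRoot_exp 3 (by norm_num)

theorem ω_sq_add_ω_add_one : ω ^ 2 + ω + 1 = 0 := by
  have h := isPrimitiveRoot_ω.geom_sum_eq_zero (by norm_num)
  simp only [Finset.sum_range_succ, Finset.sum_range_zero] at h
  linear_combination h

theorem ω_im_pos : 0 < ω.im := by
  simpa [ω, exp_im] using
    Real.sin_pos_of_pos_of_lt_pi (x := 2 * Real.pi / 3) (by positivity) (by linarith [Real.pi_pos])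

theorem det_vandermonde_ω_ne_zero : (vandermonde ![1, ω, ω ^ 2]).det ≠ 0 := by
  have hv : ![1, ω, ω ^ 2] = fun i : Fin 3 => ω ^ (i : ℕ) := by
    ext i
    fin_cases i <;> simp
  rw [det_vandermonde_ne_zero_iff, hv]
  intro i j hij
  exact Fin.ext (isPrimitiveRoot_ω.pow_inj i.isLt j.isLt hij)

theorem cf_add_sf_add_df (z : ℂ) : cf z + sf z + df z = exp z := by
  have h3 := isPrimitiveRoot_ω.pow_eq_one
  have h2 := ω_sq_add_ω_add_one
  simp only [cf, sf, df, h3, pow_one, one_mul, inv_one]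
  field_simp [isPrimitiveRoot_ω.ne_zero three_ne_zero]
  grind

theorem cf_add_ω_mul_sf_add_ω_sq_mul_df (z : ℂ) :
    cf z + ω * sf z + ω ^ 2 * df z = exp (ω * z) := by
  have h3 := isPrimitiveRoot_ω.pow_eq_one
  have h2 := ω_sq_add_ω_add_one
  simp only [cf, sf, df, h3, pow_one, one_mul, inv_one]
  field_simp [isPrimitiveRoot_ω.ne_zero three_ne_zero]
  grind

theorem cf_add_ω_sq_mul_sf_add_ω_mul_df (z : ℂ) :
    cf z + ω ^ 2 * sf z + ω * df z = exp (ω ^ 2 * z) := by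
  have h3 := isPrimitiveRoot_ω.pow_eq_one
  have h2 := ω_sq_add_ω_add_one
  simp only [cf, sf, df, h3, pow_one, one_mul, inv_one]
  field_simp [isPrimitiveRoot_ω.ne_zero three_ne_zero]
  grind

theorem three_mul_cf (z : ℂ) : 3 * cf z = exp z + exp (ω * z) + exp (ω ^ 2 * z) := by
  linear_combination cf_add_sf_add_df z + cf_add_ω_mul_sf_add_ω_sq_mul_df z +
    cf_add_ω_sq_mul_sf_add_ω_mul_df z - (sf z + df z) * ω_sq_add_ω_add_one

theorem exp_ω_mul_ne_one {z : ℂ} (hre : z.re = 0) (hz : z ≠ 0) : exp (ω * z) ≠ 1 := by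
  have him : z.im ≠ 0 := fun him => hz (Complex.ext hre him)
  intro h
  have h_re : (ω * z).re = 0 := by
    simpa only [norm_exp, norm_one, Real.exp_eq_one_iff] using congrArg norm h
  rw [mul_re, hre, mul_zero, zero_sub, neg_eq_zero] at h_re
  exact mul_ne_zero ω_im_pos.ne' him h_re

theorem exp_ω_mul_mul_exp_ω_sq_mul {z : ℂ} (hz : exp z = 1) :
    exp (ω * z) * exp (ω ^ 2 * z) = 1 := by
  rw [← exp_add, show ω * z + ω ^ 2 * z = -z by linear_combination z * ω_sq_add_ω_add_one,
    exp_neg, hz, inv_one]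

theorem cf_ne_one {z : ℂ} (hz : exp z = 1) (hωz : exp (ω * z) ≠ 1) : cf z ≠ 1 := by
  intro hc
  have hsq : (exp (ω * z) - 1) ^ 2 = 0 := by
    linear_combination -exp (ω * z) * three_mul_cf z + 3 * exp (ω * z) * hc -
      exp (ω * z) * hz - exp_ω_mul_mul_exp_ω_sq_mul hz
  exact hωz (sub_eq_zero.mp (pow_eq_zero_iff two_ne_zero |>.mp hsq))

theorem M₀_mul_diagonal {lam : ℂ} (hlam : lam ≠ 0) :
    M₀ lam * diagonal ![1, I * lam, (I * lam) ^ 2] =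
      diagonal ![1, I * lam, (I * lam) ^ 2] *
        circulant ![cf (I * lam) - 1, df (I * lam), sf (I * lam)] := by
  ext i j
  fin_cases i <;> fin_cases j <;>
    simp [M₀, mul_apply, Fin.sum_univ_three, circulant_apply] <;> field_simp

theorem rank_M₀ {lam : ℂ} (hlam : lam ≠ 0) :
    (M₀ lam).rank = (diagonal ![exp (I * lam) - 1, exp (ω * (I * lam)) - 1,
      exp (ω ^ 2 * (I * lam)) - 1]).rank := by
  have hD : IsUnit (diagonal ![1, I * lam, (I * lam) ^ 2]).det := by
    simp [Fin.prod_univ_three, hlam]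
  have hC := circulant_fin_three_mul_vandermonde isPrimitiveRoot_ω.pow_eq_one
    (cf (I * lam) - 1) (df (I * lam)) (sf (I * lam))
  rw [rank_eq_of_mul_eq_mul hD (M₀_mul_diagonal hlam),
    rank_eq_of_mul_eq_mul det_vandermonde_ω_ne_zero.isUnit hC]
  congr 2
  ext i
  fin_cases i <;>
    simp only [Fin.zero_eta, Fin.mk_one, Fin.reduceFinMk, cons_val_zero, cons_val_one, cons_val]
  · linear_combination cf_add_sf_add_df (I * lam)
  · linear_combination cf_add_ω_mul_sf_add_ω_sq_mul_df (I * lam)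
  · linear_combination cf_add_ω_sq_mul_sf_add_ω_mul_df (I * lam)

/-- for n ≠ 0, c(2nπi) ≠ 1 and M(0,2nπ) has rank exactly 2. -/
theorem stmt_14 (n : ℤ) (hn : n ≠ 0) :
    cf (2 * n * Real.pi * Complex.I) ≠ 1 ∧
    (M₀ (2 * n * Real.pi : ℂ)).rank = 2 := by
  have hlam : (2 * n * Real.pi : ℂ) ≠ 0 := by simp [hn, Real.pi_ne_zero]
  set z := I * (2 * n * Real.pi : ℂ) with hz
  have hexp : exp z = 1 := by
    rw [show z = n * (2 * Real.pi * I) by ring]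
    exact exp_int_mul_two_pi_mul_I n
  have ha : exp (ω * z) ≠ 1 := exp_ω_mul_ne_one (by simp [z]) (mul_ne_zero I_ne_zero hlam)
  have hb : exp (ω ^ 2 * z) ≠ 1 := fun hb =>
    ha (by simpa [hb] using exp_ω_mul_mul_exp_ω_sq_mul hexp)
  refine ⟨by rw [show (2 * n * Real.pi * I : ℂ) = z by ring]; exact cf_ne_one hexp ha, ?_⟩
  rw [rank_M₀ hlam, ← hz, hexp, sub_self]
  exact rank_diagonal_zero_cons_cons (sub_ne_zero.mpr ha) (sub_ne_zero.mpr hb)
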